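/- arXiv:2307.06323 — 5 statements merged into one kernel-verified Lean document; each statement's English description precedes it below -/
import Mathlib

section
/- Subject to the constraints x + y = R - K - 1, x ≥ y, y ≥ 1 with x, y nonnegative integers, the minimizing choice of x for the function (3R - 2x - K - 1)/(R - x - K - 1) is x = (R-K-1)/2 if R-K is odd and x = (R-K)/2 if R-K is even, yielding minimum total cost 4R/(R-K-1) if R-K is odd and (4R-2)/(R-K-2) if R-K is even. -/
/-- The total cost of the PRUW scheme with noise parameter `x`. -/
noncomputable def totalCost (R K : ℤ) (x : ℤ) : ℝ :=
  (3*(R:ℝ) - 2*(x:ℝ) - (K:ℝ) - 1) / ((R:ℝ) - (x:ℝ) - (K:ℝ) - 1)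

lemma cost_eq (R K x : ℤ) (h : (1:ℤ) ≤ R - K - 1 - x) :
    totalCost R K x = 2 + ((R:ℝ) + K + 1) / ((R:ℝ) - K - 1 - x) := by
  have h' : (1:ℝ) ≤ (R:ℝ) - K - 1 - x := by exact_mod_cast h
  have hd : ((R:ℝ) - x - K - 1) ≠ 0 := by linarith
  have hd' : ((R:ℝ) - K - 1 - x) ≠ 0 := by linarith
  unfold totalCost
  field_simp
  ring

/-- Subject to `x + y = R - K - 1`, `x ≥ y`, `y ≥ 1` with `x, y` nonnegative
integers, the minimizing `x` of `(3R - 2x - K - 1)/(R - x - K - 1)` is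
`x = (R-K-1)/2` if `R-K` is odd and `x = (R-K)/2` if `R-K` is even, with
minimum value `4R/(R-K-1)` if `R-K` is odd and `(4R-2)/(R-K-2)` if even. -/
theorem stmt_3 (R K : ℤ) (hK : 0 < K)
    (hbound : (Odd (R - K) → K ≤ R - 3) ∧ (Even (R - K) → K ≤ R - 4)) :
    ∃ x y : ℤ, x + y = R - K - 1 ∧ y ≤ x ∧ 1 ≤ y ∧ 0 ≤ x ∧ 0 ≤ y ∧
      (Odd (R - K) → 2 * x = R - K - 1 ∧
        totalCost R K x = 4*(R:ℝ) / ((R:ℝ) - K - 1)) ∧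
      (Even (R - K) → 2 * x = R - K ∧
        totalCost R K x = (4*(R:ℝ) - 2) / ((R:ℝ) - K - 2)) ∧
      (∀ x' y' : ℤ, x' + y' = R - K - 1 → y' ≤ x' → 1 ≤ y' →
        totalCost R K x ≤ totalCost R K x') := by
  have hA : (0:ℝ) < (R:ℝ) + K + 1 := by
    rcases Int.even_or_odd (R - K) with he | ho
    · have := hbound.2 he
      have : (5:ℤ) ≤ R := by linarith
      have hR : (5:ℝ) ≤ (R:ℝ) := by exact_mod_cast this
      have hK' : (1:ℝ) ≤ (K:ℝ) := by exact_mod_cast hK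
      linarith
    · have := hbound.1 ho
      have : (4:ℤ) ≤ R := by linarith
      have hR : (4:ℝ) ≤ (R:ℝ) := by exact_mod_cast this
      have hK' : (1:ℝ) ≤ (K:ℝ) := by exact_mod_cast hK
      linarith
  rcases Int.even_or_odd (R - K) with he | ho
  · -- Even case
    obtain ⟨m, hm⟩ := he
    have hKb := hbound.2 ⟨m, hm⟩
    have hm2 : 2 ≤ m := by linarith
    refine ⟨m, m - 1, by linarith, by linarith, by linarith, by linarith, by linarith, ?_, ?_, ?_⟩
    · intro hodd
      exact absurd hodd (Int.not_odd_iff_even.mpr ⟨m, hm⟩)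
    · intro _
      constructor
      · linarith
      · have hy : (1:ℤ) ≤ R - K - 1 - m := by linarith
        rw [cost_eq R K m hy]
        have hmr : (R:ℝ) - K = 2 * m := by exact_mod_cast (by push_cast [hm]; ring : ((R - K : ℤ) : ℝ) = 2 * (m:ℝ))
        have hm1 : ((m:ℝ) - 1) ≠ 0 := by
          have : (2:ℝ) ≤ (m:ℝ) := by exact_mod_cast hm2
          linarith
        have hden : ((R:ℝ) - K - 2) ≠ 0 := by rw [hmr]; intro h; apply hm1; linarith
        have hden2 : ((R:ℝ) - K - 1 - m) = (m:ℝ) - 1 := by rw [sub_sub, sub_sub]; linarith [hmr]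
        rw [hden2]
        field_simp
        nlinarith [hmr]
    · intro x' y' h1 h2 h3
      have hy' : (1:ℤ) ≤ R - K - 1 - x' := by omega
      rw [cost_eq R K m (by linarith), cost_eq R K x' hy']
      have hle : R - K - 1 - x' ≤ R - K - 1 - m := by omega
      have h1r : (1:ℝ) ≤ (R:ℝ) - K - 1 - x' := by exact_mod_cast hy' 
      have hler : (R:ℝ) - K - 1 - x' ≤ (R:ℝ) - K - 1 - m := by
        exact_mod_cast (by push_cast; exact_mod_cast hle : ((R-K-1-x' : ℤ):ℝ) ≤ ((R-K-1-m : ℤ):ℝ))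
      linarith [div_le_div_of_nonneg_left hA.le (by linarith : (0:ℝ) < (R:ℝ) - K - 1 - x') hler]
  · -- Odd case
    obtain ⟨m, hm⟩ := ho
    have hKb := hbound.1 ⟨m, hm⟩
    have hm1 : 1 ≤ m := by linarith
    refine ⟨m, m, by linarith, le_refl m, hm1, by linarith, by linarith, ?_, ?_, ?_⟩
    · intro _
      constructor
      · linarith
      · have hy : (1:ℤ) ≤ R - K - 1 - m := by linarith
        rw [cost_eq R K m hy]
        have hmr : (R:ℝ) - K = 2 * m + 1 := by
          exact_mod_cast (by push_cast [hm]; ring : ((R - K : ℤ) : ℝ) = 2 * (m:ℝ) + 1)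
        have hm0 : ((m:ℝ)) ≠ 0 := by
          have : (1:ℝ) ≤ (m:ℝ) := by exact_mod_cast hm1
          linarith
        have hden : ((R:ℝ) - K - 1) ≠ 0 := by rw [hmr]; intro h; apply hm0; linarith
        have hden2 : ((R:ℝ) - K - 1 - m) = (m:ℝ) := by linarith [hmr]
        rw [hden2]
        field_simp
        nlinarith [hmr]
    · intro hev
      exact absurd hev (Int.not_even_iff_odd.mpr ⟨m, hm⟩)
    · intro x' y' h1 h2 h3
      have hy' : (1:ℤ) ≤ R - K - 1 - x' := by omega
      rw [cost_eq R K m (by linarith), cost_eq R K x' hy']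
      have hle : R - K - 1 - x' ≤ R - K - 1 - m := by omega
      have h1r : (1:ℝ) ≤ (R:ℝ) - K - 1 - x' := by exact_mod_cast hy' 
      have hler : (R:ℝ) - K - 1 - x' ≤ (R:ℝ) - K - 1 - m := by
        exact_mod_cast (by push_cast; exact_mod_cast hle : ((R-K-1-x' : ℤ):ℝ) ≤ ((R-K-1-m : ℤ):ℝ))
      linarith [div_le_div_of_nonneg_left hA.le (by linarith : (0:ℝ) < (R:ℝ) - K - 1 - x') hler]
end

section
/- For integers R ≥ 5 and K ≥ 1 with R - K even and K ≤ R - 4, we have (4(R+1))/(R - K) < (4(R-1) )/(R - K - 2) < (4R - 2)/(R - K - 2); that is, the total cost of the scheme with replication R and even R-K exceeds the costs of the neighboring schemes with replications R-1 and R+1 (both having odd difference with K). -/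
/-- For integers `R ≥ 5`, `K ≥ 1` with `R - K` even and `K ≤ R - 4`,
`4(R+1)/(R-K) < 4(R-1)/(R-K-2) < (4R-2)/(R-K-2)`: the even-difference scheme
is a local peak compared to its odd-difference neighbors. -/
theorem stmt_6 (R K : ℤ) (hR : 5 ≤ R) (hK : 1 ≤ K)
    (heven : Even (R - K)) (hKR : K ≤ R - 4) :
    4*((R:ℝ)+1) / ((R:ℝ) - K) < 4*((R:ℝ)-1) / ((R:ℝ) - K - 2) ∧
    4*((R:ℝ)-1) / ((R:ℝ) - K - 2) < (4*(R:ℝ) - 2) / ((R:ℝ) - K - 2) := by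
  have h4 : (4:ℝ) ≤ (R:ℝ) - K := by
    have : (K:ℝ) ≤ (R:ℝ) - 4 := by exact_mod_cast hKR
    linarith
  have hK' : (1:ℝ) ≤ (K:ℝ) := by exact_mod_cast hK
  have hd1 : (0:ℝ) < (R:ℝ) - K := by linarith
  have hd2 : (0:ℝ) < (R:ℝ) - K - 2 := by linarith
  constructor
  · rw [div_lt_div_iff₀ hd1 hd2]
    nlinarith
  · rw [div_lt_div_iff₀ hd2 hd2]
    nlinarith
end

section
/- Let R ≥ 5, K ≥ 1 be integers with R - K even and K ≤ R - 4, and set μ = R/(N K), μ₁ = (R-1)/(N K), μ₂ = (R+1)/(N K) for a positive integer N ≥ R + 1. Then there exists γ ∈ [0,1] with γμ₁ + (1-γ)μ₂ = μ, and for this γ, γ·4(R-1)/(R-K-2) + (1-γ)·4(R+1)/(R-K) < (4R-2)/(R-K-2). -/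
/-- Lemma 4 of the paper: mixing the two PRUW schemes with replications `R-1`
and `R+1` (odd difference with `K`) meets the storage constraint
`μ = R/(NK)` and achieves a strictly lower total cost than the direct scheme
with even `R - K`. -/
theorem stmt_7 (R K N : ℤ) (hR : 5 ≤ R) (hK : 1 ≤ K)
    (heven : Even (R - K)) (hKR : K ≤ R - 4) (hN : R + 1 ≤ N) :
    ∃ γ : ℝ, 0 ≤ γ ∧ γ ≤ 1 ∧
      γ * (((R:ℝ)-1) / ((N:ℝ)*K)) + (1-γ) * (((R:ℝ)+1) / ((N:ℝ)*K))
        = (R:ℝ) / ((N:ℝ)*K) ∧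
      γ * (4*((R:ℝ)-1) / ((R:ℝ)-K-2)) + (1-γ) * (4*((R:ℝ)+1) / ((R:ℝ)-K))
        < (4*(R:ℝ) - 2) / ((R:ℝ) - K - 2) := by
  refine ⟨1/2, by norm_num, by norm_num, ?_, ?_⟩
  · have hR' : (5:ℝ) ≤ R := by exact_mod_cast hR
    have hK' : (1:ℝ) ≤ K := by exact_mod_cast hK
    have hN' : (R:ℝ) + 1 ≤ N := by exact_mod_cast hN
    have hNK : (N:ℝ)*K ≠ 0 := ne_of_gt (by nlinarith)
    field_simp
    ring
  · have hR' : (5:ℝ) ≤ R := by exact_mod_cast hR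
    have hK' : (1:ℝ) ≤ K := by exact_mod_cast hK
    have hKR' : (K:ℝ) ≤ R - 4 := by exact_mod_cast hKR
    have h1 : (0:ℝ) < (R:ℝ) - K := by linarith
    have h2 : (0:ℝ) < (R:ℝ) - K - 2 := by linarith
    have e : 1/2 * (4*((R:ℝ)-1) / ((R:ℝ)-K-2)) + (1-1/2) * (4*((R:ℝ)+1) / ((R:ℝ)-K))
        = (2*((R:ℝ)-1)*((R:ℝ)-K) + 2*((R:ℝ)+1)*((R:ℝ)-K-2)) / (((R:ℝ)-K-2)*((R:ℝ)-K)) := by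
      field_simp
      ring
    rw [e, div_lt_div_iff₀ (by positivity) h2]
    nlinarith [h1, h2]
end

section
/- Let N ∈ ℕ, μ : Fin N → ℝ with 0 < μ(n) ≤ 1/⌊k⌋ for a real k ≥ 1, p = Σₙ μ(n), s = ⌊k⌋p ∉ ℤ, and define h̃(n) = max(μ(n) - (⌈s⌉ - s)/⌊k⌋, 0). Then Σₙ h̃(n) ≤ max( (⌊s⌋/⌊k⌋)(s - ⌊s⌋), p - (⌈s⌉/⌊k⌋)(⌈s⌉ - s) ), and consequently p - Σₙ h̃(n) ≥ (⌊s⌋/⌊k⌋)(⌈s⌉ - s). -/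
/-- Key bound in the proof of Lemma 1 (𝒩 ≤ 𝒟): with `s = ⌊k⌋p ∉ ℤ` and
`h̃(n) = [μ(n) - (⌈s⌉-s)/⌊k⌋]⁺`, the sum `Σ h̃(n)` is at most
`max((⌊s⌋/⌊k⌋)(s-⌊s⌋), p - (⌈s⌉/⌊k⌋)(⌈s⌉-s))`, hence
`p - Σ h̃(n) ≥ (⌊s⌋/⌊k⌋)(⌈s⌉-s)`. -/
theorem stmt_12 (N : ℕ) (k : ℝ) (hk : 1 ≤ k) (μ : Fin N → ℝ)
    (hμ : ∀ n, 0 < μ n ∧ μ n ≤ 1 / (⌊k⌋ : ℝ))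
    (p s : ℝ) (hp : p = ∑ n, μ n) (hs : s = (⌊k⌋ : ℝ) * p)
    (hsnotint : ∀ m : ℤ, (m : ℝ) ≠ s) :
    (∑ n, max (μ n - ((⌈s⌉ : ℝ) - s) / (⌊k⌋ : ℝ)) 0)
      ≤ max (((⌊s⌋ : ℝ) / (⌊k⌋ : ℝ)) * (s - (⌊s⌋ : ℝ)))
            (p - ((⌈s⌉ : ℝ) / (⌊k⌋ : ℝ)) * ((⌈s⌉ : ℝ) - s)) ∧
    ((⌊s⌋ : ℝ) / (⌊k⌋ : ℝ)) * ((⌈s⌉ : ℝ) - s)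
      ≤ p - ∑ n, max (μ n - ((⌈s⌉ : ℝ) - s) / (⌊k⌋ : ℝ)) 0 := by
  have hK1 : (1 : ℤ) ≤ ⌊k⌋ := by
    have : (1 : ℝ) ≤ k := hk
    exact_mod_cast Int.le_floor.mpr (by exact_mod_cast this)
  have hK : (1 : ℝ) ≤ (⌊k⌋ : ℝ) := by exact_mod_cast hK1
  have hK0 : (0 : ℝ) < (⌊k⌋ : ℝ) := by linarith
  set K : ℝ := (⌊k⌋ : ℝ) with hKdef
  have hfl : (⌊s⌋ : ℝ) < s := lt_of_le_of_ne (Int.floor_le s) (hsnotint ⌊s⌋)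
  have hcl : s < (⌈s⌉ : ℝ) :=
    lt_of_le_of_ne (Int.le_ceil s) (fun h => hsnotint ⌈s⌉ h.symm)
  have hceilZ : ⌈s⌉ = ⌊s⌋ + 1 := by
    have h1 : ⌊s⌋ < ⌈s⌉ := by exact_mod_cast hfl.trans hcl
    have h2 : ⌈s⌉ ≤ ⌊s⌋ + 1 := Int.ceil_le_floor_add_one s
    omega
  have hceil : (⌈s⌉ : ℝ) = (⌊s⌋ : ℝ) + 1 := by exact_mod_cast hceilZ
  set c : ℝ := ((⌈s⌉ : ℝ) - s) / K with hc
  have hc0 : 0 < c := div_pos (by linarith) hK0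
  have hc1 : c ≤ 1 / K := by
    rw [hc, div_le_div_iff₀ hK0 hK0]
    nlinarith
  set S : Finset (Fin N) := Finset.univ.filter (fun n => c < μ n) with hSdef
  have hsum : (∑ n, max (μ n - c) 0) = ∑ n ∈ S, (μ n - c) := by
    rw [hSdef, Finset.sum_filter]
    refine Finset.sum_congr rfl fun n _ => ?_
    split_ifs with h
    · exact max_eq_left (by linarith)
    · push_neg at h; exact max_eq_right (by linarith)
  set V : ℕ := S.card with hVdef
  have hbound1 : (∑ n ∈ S, (μ n - c)) ≤ (V : ℝ) * (1 / K - c) := by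
    have := Finset.sum_le_card_nsmul S (fun n => μ n - c) (1 / K - c)
      (fun n _ => by have := (hμ n).2; linarith)
    simpa [nsmul_eq_mul] using this
  have hbound2 : (∑ n ∈ S, (μ n - c)) ≤ p - (V : ℝ) * c := by
    have h1 : (∑ n ∈ S, μ n) ≤ p := by
      rw [hp]
      exact Finset.sum_le_sum_of_subset_of_nonneg (Finset.subset_univ S)
        (fun n _ _ => (hμ n).1.le)
    have h2 : (∑ n ∈ S, (μ n - c)) = (∑ n ∈ S, μ n) - (V : ℝ) * c := by
      rw [Finset.sum_sub_distrib, Finset.sum_const, nsmul_eq_mul]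
    linarith
  have hps : p = s / K := by
    field_simp [hs]
    rw [hs]; ring
  have hmain : (∑ n, max (μ n - c) 0)
      ≤ max (((⌊s⌋ : ℝ) / K) * (s - (⌊s⌋ : ℝ)))
            (p - ((⌈s⌉ : ℝ) / K) * ((⌈s⌉ : ℝ) - s)) := by
    rw [hsum]
    rcases le_or_gt ((V : ℤ)) ⌊s⌋ with h | h
    · have hV : (V : ℝ) ≤ (⌊s⌋ : ℝ) := by exact_mod_cast h
      refine le_max_of_le_left ?_
      have h3 : (V : ℝ) * (1 / K - c) ≤ (⌊s⌋ : ℝ) * (1 / K - c) :=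
        mul_le_mul_of_nonneg_right hV (by linarith)
      have h4 : (⌊s⌋ : ℝ) * (1 / K - c) = ((⌊s⌋ : ℝ) / K) * (s - (⌊s⌋ : ℝ)) := by
        have e1 : (1:ℝ)/K - c = (s - (⌊s⌋:ℝ))/K := by rw [hc, hceil]; ring
        rw [e1]; ring
      linarith
    · have hV : ((⌈s⌉ : ℝ)) ≤ (V : ℝ) := by
        have : ⌈s⌉ ≤ (V : ℤ) := by omega
        exact_mod_cast this
      refine le_max_of_le_right ?_
      have h3 : ((⌈s⌉ : ℝ)) * c ≤ (V : ℝ) * c :=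
        mul_le_mul_of_nonneg_right hV hc0.le
      have h4 : ((⌈s⌉ : ℝ)) * c = ((⌈s⌉ : ℝ) / K) * ((⌈s⌉ : ℝ) - s) := by
        rw [hc]; ring
      linarith
  constructor
  · exact hmain
  · have h5 : ((⌊s⌋ : ℝ) / K) * (s - (⌊s⌋ : ℝ)) ≤ p - ((⌊s⌋ : ℝ) / K) * ((⌈s⌉ : ℝ) - s) := by
      have h7 : ((⌊s⌋ : ℝ) / K) ≤ p := by
        rw [hps, div_le_div_iff₀ hK0 hK0]
        nlinarith
      have e : ((⌊s⌋:ℝ)/K)*(s-(⌊s⌋:ℝ)) + ((⌊s⌋:ℝ)/K)*((⌈s⌉:ℝ)-s) = (⌊s⌋:ℝ)/K := by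
        rw [hceil]; ring
      linarith
    have h6 : p - ((⌈s⌉ : ℝ) / K) * ((⌈s⌉ : ℝ) - s) ≤ p - ((⌊s⌋ : ℝ) / K) * ((⌈s⌉ : ℝ) - s) := by
      have h8 : ((⌊s⌋ : ℝ) / K) ≤ ((⌈s⌉ : ℝ) / K) := by
        rw [div_le_div_iff₀ hK0 hK0]; nlinarith
      have h9 : 0 ≤ (⌈s⌉ : ℝ) - s := by linarith
      nlinarith [mul_le_mul_of_nonneg_right h8 h9]
    have := max_le h5 h6
    linarith [hmain, this]
end

section
/- Let N ∈ ℕ, μ : Fin N → ℝ with 0 < μ(n) ≤ 1/⌊k⌋ for a real k ≥ 1, p = Σₙ μ(n), s = ⌊k⌋p ∉ ℤ, and define m̃(n) = max(μ(n) - (s - ⌊s⌋)/⌊k⌋, 0). Then Σₙ m̃(n) ≤ (⌊s⌋/⌊k⌋)(⌈s⌉ - s). -/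
/-- Bound in the proof of Lemma 1 (𝒩 ≥ 0): with `s = ⌊k⌋p ∉ ℤ` and
`m̃(n) = [μ(n) - (s-⌊s⌋)/⌊k⌋]⁺`, we have
`Σ m̃(n) ≤ (⌊s⌋/⌊k⌋)(⌈s⌉ - s)`. -/
theorem stmt_13 (N : ℕ) (k : ℝ) (hk : 1 ≤ k) (μ : Fin N → ℝ)
    (hμ : ∀ n, 0 < μ n ∧ μ n ≤ 1 / (⌊k⌋ : ℝ))
    (p s : ℝ) (hp : p = ∑ n, μ n) (hs : s = (⌊k⌋ : ℝ) * p)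
    (hsnotint : ∀ m : ℤ, (m : ℝ) ≠ s) :
    (∑ n, max (μ n - (s - (⌊s⌋ : ℝ)) / (⌊k⌋ : ℝ)) 0)
      ≤ ((⌊s⌋ : ℝ) / (⌊k⌋ : ℝ)) * ((⌈s⌉ : ℝ) - s) := by
  set K : ℝ := (⌊k⌋ : ℝ) with hKdef
  have hK1 : (1:ℝ) ≤ K := by
    rw [hKdef]
    have : (1:ℤ) ≤ ⌊k⌋ := Int.le_floor.2 (by exact_mod_cast hk)
    exact_mod_cast this
  have hK0 : (0:ℝ) < K := lt_of_lt_of_le one_pos hK1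
  set f : ℝ := (s - (⌊s⌋ : ℝ)) / K with hfdef
  have hfl : (⌊s⌋ : ℝ) < s := lt_of_le_of_ne (Int.floor_le s) (hsnotint ⌊s⌋)
  have hfu : s - (⌊s⌋ : ℝ) < 1 := by
    have := Int.lt_floor_add_one s; linarith
  have hceil : (⌈s⌉ : ℝ) = (⌊s⌋ : ℝ) + 1 := by
    have h1 : ⌈s⌉ ≤ ⌊s⌋ + 1 := Int.ceil_le_floor_add_one s
    have h2 : (⌊s⌋ : ℝ) < (⌈s⌉ : ℝ) := lt_of_lt_of_le hfl (Int.le_ceil s)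
    have h3 : ⌊s⌋ < ⌈s⌉ := by exact_mod_cast h2
    have : ⌈s⌉ = ⌊s⌋ + 1 := le_antisymm h1 (by omega)
    exact_mod_cast this
  have hf0 : 0 ≤ f := div_nonneg (by linarith) hK0.le
  have hfK : f ≤ 1 / K := by
    rw [hfdef]; gcongr
  -- p > 0 and s > 0
  have hp0 : 0 ≤ p := by
    rw [hp]; exact Finset.sum_nonneg fun n _ => (hμ n).1.le
  have hs0 : 0 < s := by
    rcases lt_or_eq_of_le hp0 with h | h
    · rw [hs]; positivity
    · exfalso; apply hsnotint 0; rw [hs, ← h]; simp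
  have hfloor0 : (0:ℝ) ≤ (⌊s⌋ : ℝ) := by
    exact_mod_cast Int.floor_nonneg.2 hs0.le
  -- the set where the max is positive
  set A : Finset (Fin N) := Finset.univ.filter (fun n => f ≤ μ n) with hA
  have hsum : (∑ n, max (μ n - f) 0) = ∑ n ∈ A, (μ n - f) := by
    rw [← Finset.sum_filter_add_sum_filter_not Finset.univ (fun n => f ≤ μ n)]
    have h1 : ∑ n ∈ A, max (μ n - f) 0 = ∑ n ∈ A, (μ n - f) := by
      apply Finset.sum_congr rfl
      intro n hn
      rw [hA, Finset.mem_filter] at hn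
      exact max_eq_left (by linarith [hn.2])
    have h2 : ∑ n ∈ Finset.univ.filter (fun n => ¬ f ≤ μ n), max (μ n - f) 0 = 0 := by
      apply Finset.sum_eq_zero
      intro n hn
      rw [Finset.mem_filter] at hn
      exact max_eq_right (by push_neg at hn; linarith [hn.2])
    rw [h1, h2, add_zero]
  rw [hsum, Finset.sum_sub_distrib, Finset.sum_const, nsmul_eq_mul]
  set Y : ℕ := A.card with hY
  by_cases hcase : (Y : ℝ) ≤ (⌊s⌋ : ℝ)
  · -- Y ≤ ⌊s⌋ : use μ n ≤ 1/K
    have hb : ∑ n ∈ A, μ n ≤ (Y : ℝ) * (1 / K) := by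
      calc ∑ n ∈ A, μ n ≤ ∑ n ∈ A, (1 / K) :=
            Finset.sum_le_sum fun n _ => (hμ n).2
        _ = (Y : ℝ) * (1 / K) := by rw [Finset.sum_const, nsmul_eq_mul]
    have hkey : (Y : ℝ) * (1 / K) - (Y : ℝ) * f ≤ (⌊s⌋ : ℝ) * (1 / K - f) := by
      have : (Y : ℝ) * (1 / K - f) ≤ (⌊s⌋ : ℝ) * (1 / K - f) :=
        mul_le_mul_of_nonneg_right hcase (by linarith)
      linarith [this]
    have hgen : ∀ a : ℝ, a * (1 / K - (s - a) / K) = (a / K) * ((a + 1) - s) := by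
      intro a; field_simp; try ring
      all_goals simp
    have hfin : (⌊s⌋ : ℝ) * (1 / K - f) = ((⌊s⌋ : ℝ) / K) * ((⌈s⌉ : ℝ) - s) := by
      rw [hceil, hfdef]; exact hgen _
    linarith
  · -- Y ≥ ⌈s⌉ : use total mass p
    push_neg at hcase
    have hYc : (⌈s⌉ : ℝ) ≤ (Y : ℝ) := by
      have h1 : ⌊s⌋ < (Y : ℤ) := by exact_mod_cast hcase
      have : (⌈s⌉ : ℤ) ≤ (Y : ℤ) := by
        have := Int.ceil_le_floor_add_one s; omega
      exact_mod_cast this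
    have hb : ∑ n ∈ A, μ n ≤ p := by
      rw [hp]
      exact Finset.sum_le_sum_of_subset_of_nonneg (Finset.filter_subset _ _)
        (fun n _ _ => (hμ n).1.le)
    have hYf : (⌈s⌉ : ℝ) * f ≤ (Y : ℝ) * f := mul_le_mul_of_nonneg_right hYc hf0
    have hps : p = s / K := by rw [hs]; field_simp
    have hgen : ∀ a : ℝ, s / K - (a + 1) * ((s - a) / K) = (a / K) * ((a + 1) - s) := by
      intro a; field_simp; try ring
      all_goals simp
    have hfin : s / K - (⌈s⌉ : ℝ) * f = ((⌊s⌋ : ℝ) / K) * ((⌈s⌉ : ℝ) - s) := by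
      rw [hceil, hfdef]; exact hgen _
    linarith
end
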